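/- Let $1<q<\infty$, $\beta>0$, $d\ge 2$, and $\mu(dx)=\exp(-\beta|x|^q)\,dx$. For every nonnegative $f\in C_0^1(\mathbb{R}^d)$ vanishing on the unit ball $B(0,1)$, one has $\beta q\int f\,|x|^{q-1}\,\mu(dx)\le \int|\nabla f|\,\mu(dx)+(d-1)\int f\,\mu(dx)$. -/

import Mathlib

/-!
Integrate the divergence of the vector field `X x = f x e^{-β|x|^q} x/|x|`, which is `C¹` with
compact support because `f` vanishes near the origin. Writing `X x = F x • x` in dimension `n`,
its divergence is `DF(x) x + n F(x)`, whose integral vanishes by integrating by parts against the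
coordinate functions. Pointwise it equals
`(Df(x) (x/|x|) + (n-1) f/|x| - βq f |x|^{q-1}) e^{-β|x|^q}`, and on the support of `f` we have
`|x| ≥ 1`, so the first two terms are at most `|∇f|` and `(n-1) f`.
-/

open MeasureTheory Metric Filter Topology
open scoped ENNReal

noncomputable section

abbrev E (d : ℕ) := EuclideanSpace ℝ (Fin d)

open Module

section Smoothness

variable {V : Type*} [NormedAddCommGroup V]

theorem ContDiff.mul_of_eqOn_zero [NormedSpace ℝ V] {n : WithTop ℕ∞} {f g : V → ℝ} {s : Set V}
    (hf : ContDiff ℝ n f) (hs : IsOpen s) (hfs : Set.EqOn f 0 s)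
    (hg : ∀ x ∉ s, ContDiffAt ℝ n g x) :
    ContDiff ℝ n fun x => f x * g x := by
  refine contDiff_iff_contDiffAt.2 fun x => ?_
  by_cases hx : x ∈ s
  · refine (contDiffAt_const (c := (0 : ℝ))).congr_of_eventuallyEq ?_
    filter_upwards [hs.mem_nhds hx] with y hy
    simp [hfs hy]
  · exact hf.contDiffAt.mul (hg x hx)

theorem ContDiff.mul_comp_norm_of_eqOn_ball_zero [InnerProductSpace ℝ V] {n : WithTop ℕ∞}
    {f : V → ℝ} {φ : ℝ → ℝ} {r : ℝ} (hf : ContDiff ℝ n f) (hr : 0 < r)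
    (hfs : Set.EqOn f 0 (ball 0 r)) (hφ : ∀ t ≠ 0, ContDiffAt ℝ n φ t) :
    ContDiff ℝ n fun x => f x * φ ‖x‖ := by
  refine hf.mul_of_eqOn_zero isOpen_ball hfs fun x hx => ?_
  have hx0 : x ≠ 0 := by rintro rfl; exact hx (mem_ball_self hr)
  exact (hφ _ (norm_ne_zero_iff.2 hx0)).comp x (contDiffAt_norm ℝ hx0)

theorem ContDiff.integrable_mul_comp_norm_of_eqOn_ball_zero [InnerProductSpace ℝ V]
    [MeasurableSpace V] [OpensMeasurableSpace V] {μ : Measure V} [IsFiniteMeasureOnCompacts μ]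
    {n : WithTop ℕ∞} {f : V → ℝ} {φ : ℝ → ℝ} {r : ℝ} (hf : ContDiff ℝ n f) (hr : 0 < r)
    (hfs : Set.EqOn f 0 (ball 0 r)) (hφ : ∀ t ≠ 0, ContDiffAt ℝ n φ t)
    (hsupp : HasCompactSupport f) : Integrable (fun x => f x * φ ‖x‖) μ :=
  (hf.mul_comp_norm_of_eqOn_ball_zero hr hfs hφ).continuous.integrable_of_hasCompactSupport
    hsupp.mul_right

end Smoothness

theorem contDiffAt_exp_neg_mul_rpow {n : WithTop ℕ∞} (β q : ℝ) {t : ℝ} (ht : t ≠ 0) :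
    ContDiffAt ℝ n (fun s : ℝ => Real.exp (-β * s ^ q)) t :=
  Real.contDiff_exp.contDiffAt.comp t (contDiffAt_const.mul (Real.contDiffAt_rpow_const_of_ne ht))

section Radial

variable {V : Type*} [NormedAddCommGroup V] [NormedSpace ℝ V]

theorem fderiv_norm_apply_self {x : V} (h : DifferentiableAt ℝ (‖·‖) x) :
    fderiv ℝ (‖·‖) x x = ‖x‖ := by
  have hline : HasDerivAt (fun t : ℝ => ‖t • x‖) (fderiv ℝ (‖·‖) x x) 1 := by
    simpa [Function.comp_def] using h.hasFDerivAt.comp_hasDerivAt_of_eq (1 : ℝ)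
      ((hasDerivAt_id (1 : ℝ)).smul_const x) (one_smul ℝ x).symm
  have hscale : HasDerivAt (fun t : ℝ => ‖t • x‖) ‖x‖ 1 := by
    refine (one_mul ‖x‖ ▸ (hasDerivAt_id (1 : ℝ)).mul_const ‖x‖).congr_of_eventuallyEq ?_
    filter_upwards [lt_mem_nhds one_pos] with t ht
    simp [norm_smul, abs_of_pos ht]
  exact hline.unique hscale

theorem fderiv_comp_norm_apply_self {φ : ℝ → ℝ} {φ' : ℝ} {x : V}
    (hφ : HasDerivAt φ φ' ‖x‖) (h : DifferentiableAt ℝ (‖·‖) x) :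
    fderiv ℝ (fun y => φ ‖y‖) x x = φ' * ‖x‖ := by
  rw [show (fun y => φ ‖y‖) = φ ∘ (‖·‖) from rfl, (hφ.comp_hasFDerivAt x h.hasFDerivAt).fderiv]
  simp [fderiv_norm_apply_self h]

end Radial

section Divergence

variable {V : Type*} [NormedAddCommGroup V] [NormedSpace ℝ V] [FiniteDimensional ℝ V]
  [MeasurableSpace V] [BorelSpace V] {μ : Measure V} [μ.IsAddHaarMeasure]

theorem integral_fderiv_apply_self {F : V → ℝ} (hF : ContDiff ℝ 1 F) (hs : HasCompactSupport F) :
    ∫ x, fderiv ℝ F x x ∂μ = -(finrank ℝ V * ∫ x, F x ∂μ) := by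
  set b := finBasis ℝ V
  have hF_int : Integrable F μ := hF.continuous.integrable_of_hasCompactSupport hs
  have hint : ∀ i, Integrable (fun x => fderiv ℝ F x (b i) * b.coord i x) μ := fun i =>
    ((hF.continuous_fderiv_apply one_ne_zero).comp (continuous_id.prodMk continuous_const)
      |>.mul (b.coord i).continuous_of_finiteDimensional).integrable_of_hasCompactSupport
      ((hs.fderiv_apply ℝ (b i)).mul_right)
  have hcoord : ∀ i, ∫ x, fderiv ℝ F x (b i) * b.coord i x ∂μ = -∫ x, F x ∂μ := by
    intro i
    let c : V →L[ℝ] ℝ := LinearMap.toContinuousLinearMap (b.coord i)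
    have hc : ∀ x, fderiv ℝ c x (b i) = 1 := fun x => by rw [c.fderiv]; simp [c]
    have hibp := integral_mul_fderiv_eq_neg_fderiv_mul_of_integrable (μ := μ) (f := F) (g := c)
      (v := b i) (hint i) (by simpa only [hc, mul_one] using hF_int)
      ((hF.continuous.mul c.continuous).integrable_of_hasCompactSupport hs.mul_right)
      (fun x _ => hF.differentiable one_ne_zero x) (fun x _ => c.differentiableAt)
    simp only [hc, mul_one] at hibp
    rw [hibp, neg_neg]
    rfl
  calc ∫ x, fderiv ℝ F x x ∂μ = ∫ x, ∑ i, fderiv ℝ F x (b i) * b.coord i x ∂μ := by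
        congr 1; ext x
        nth_rewrite 2 [← b.sum_repr x]
        simp only [map_sum, map_smul, smul_eq_mul, Basis.coord_apply, mul_comm]
    _ = ∑ i, ∫ x, fderiv ℝ F x (b i) * b.coord i x ∂μ := integral_finsetSum _ fun i _ => hint i
    _ = -(finrank ℝ V * ∫ x, F x ∂μ) := by
        rw [Finset.sum_congr rfl fun i _ => hcoord i]
        simp

end Divergence

section Weighted

variable {V : Type*} [NormedAddCommGroup V] [InnerProductSpace ℝ V] [FiniteDimensional ℝ V]

theorem fderiv_apply_self_add_finrank_mul_le {f : V → ℝ} {x : V} (hf : DifferentiableAt ℝ f x)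
    (hfx : 0 ≤ f x) (hvan : ∀ y ∈ ball (0 : V) 1, f y = 0) (q β : ℝ) :
    fderiv ℝ (fun y => f y * (‖y‖⁻¹ * Real.exp (-β * ‖y‖ ^ q))) x x
        + finrank ℝ V * (f x * (‖x‖⁻¹ * Real.exp (-β * ‖x‖ ^ q))) ≤
      ‖fderiv ℝ f x‖ * Real.exp (-β * ‖x‖ ^ q) + (finrank ℝ V - 1) * (f x * Real.exp (-β * ‖x‖ ^ q))
        - β * q * (f x * ‖x‖ ^ (q - 1) * Real.exp (-β * ‖x‖ ^ q)) := by
  set e := Real.exp (-β * ‖x‖ ^ q)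
  have he : 0 < e := Real.exp_pos _
  rcases lt_or_ge ‖x‖ 1 with hx1 | hx1
  · have hloc : (fun y => f y * (‖y‖⁻¹ * Real.exp (-β * ‖y‖ ^ q))) =ᶠ[𝓝 x] fun _ => 0 := by
      filter_upwards [isOpen_ball.mem_nhds (mem_ball_zero_iff.2 hx1)] with y hy
      simp [hvan y hy]
    simp only [hloc.fderiv_eq, fderiv_const_apply, hvan x (mem_ball_zero_iff.2 hx1)]
    simp
    positivity
  have hx : x ≠ 0 := norm_pos_iff.1 (by linarith)
  have ht : ‖x‖ ≠ 0 := norm_ne_zero_iff.2 hx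
  have hρ : HasDerivAt (fun s : ℝ => s⁻¹ * Real.exp (-β * s ^ q))
      (-(‖x‖ ^ 2)⁻¹ * e + ‖x‖⁻¹ * (e * (-β * (q * ‖x‖ ^ (q - 1))))) ‖x‖ :=
    (hasDerivAt_inv ht).mul ((Real.hasDerivAt_rpow_const (Or.inl ht)).const_mul (-β)).exp
  have hnorm : DifferentiableAt ℝ (‖·‖) x := (contDiffAt_norm ℝ hx).differentiableAt one_ne_zero
  have hdiv : fderiv ℝ (fun y => f y * (‖y‖⁻¹ * Real.exp (-β * ‖y‖ ^ q))) x x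
        + finrank ℝ V * (f x * (‖x‖⁻¹ * e))
      = fderiv ℝ f x x * ‖x‖⁻¹ * e + (finrank ℝ V - 1) * (f x * ‖x‖⁻¹ * e)
        - β * q * (f x * ‖x‖ ^ (q - 1) * e) := by
    have hρx : DifferentiableAt ℝ (fun y : V => ‖y‖⁻¹ * Real.exp (-β * ‖y‖ ^ q)) x :=
      hρ.differentiableAt.comp x hnorm
    rw [fderiv_fun_mul hf hρx]
    simp only [add_apply, smul_apply, smul_eq_mul, fderiv_comp_norm_apply_self hρ hnorm, e]
    field_simp
    ring
  have hgrad : fderiv ℝ f x x * ‖x‖⁻¹ ≤ ‖fderiv ℝ f x‖ := by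
    rw [mul_inv_le_iff₀ (norm_pos_iff.2 hx)]
    exact (le_abs_self _).trans ((fderiv ℝ f x).le_opNorm x)
  have hcurv : (finrank ℝ V - 1) * (f x * ‖x‖⁻¹) ≤ (finrank ℝ V - 1) * f x := by
    have : Nontrivial V := ⟨⟨x, 0, hx⟩⟩
    have hn : (1 : ℝ) ≤ finrank ℝ V := by exact_mod_cast finrank_pos (R := ℝ) (M := V)
    refine mul_le_mul_of_nonneg_left ?_ (by linarith)
    exact mul_le_of_le_one_right hfx (inv_le_one_of_one_le₀ hx1)
  rw [hdiv]
  linarith [mul_le_mul_of_nonneg_right hgrad he.le, mul_le_mul_of_nonneg_right hcurv he.le]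

variable [MeasurableSpace V] [BorelSpace V] {μ : Measure V} [μ.IsAddHaarMeasure]

theorem mul_integral_mul_rpow_mul_exp_le {f : V → ℝ} (hf : ContDiff ℝ 1 f)
    (hsupp : HasCompactSupport f) (hf0 : ∀ x, 0 ≤ f x) (hvan : ∀ x ∈ ball (0 : V) 1, f x = 0)
    (q β : ℝ) :
    β * q * ∫ x, f x * ‖x‖ ^ (q - 1) * Real.exp (-β * ‖x‖ ^ q) ∂μ ≤
      (∫ x, ‖fderiv ℝ f x‖ * Real.exp (-β * ‖x‖ ^ q) ∂μ) +
        (finrank ℝ V - 1) * ∫ x, f x * Real.exp (-β * ‖x‖ ^ q) ∂μ := by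
  have hexp {n : WithTop ℕ∞} := fun t (ht : t ≠ 0) => contDiffAt_exp_neg_mul_rpow (n := n) β q ht
  have hf_ball : Set.EqOn f 0 (ball 0 1) := fun x hx => hvan x hx
  have hDf_ball : Set.EqOn (fun x => ‖fderiv ℝ f x‖) 0 (ball 0 1) := fun x hx => by
    have hloc : f =ᶠ[𝓝 x] fun _ => 0 := by
      filter_upwards [isOpen_ball.mem_nhds hx] with y hy using hvan y hy
    simp [hloc.fderiv_eq]
  set F : V → ℝ := fun y => f y * (‖y‖⁻¹ * Real.exp (-β * ‖y‖ ^ q))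
  have hρ : ∀ t ≠ 0, ContDiffAt ℝ 1 (fun s : ℝ => s⁻¹ * Real.exp (-β * s ^ q)) t :=
    fun t ht => (contDiffAt_inv ℝ ht).mul (hexp t ht)
  have hF : ContDiff ℝ 1 F := hf.mul_comp_norm_of_eqOn_ball_zero one_pos hf_ball hρ
  have hFs : HasCompactSupport F := hsupp.mul_right
  have hF_int : Integrable F μ :=
    hf.integrable_mul_comp_norm_of_eqOn_ball_zero one_pos hf_ball hρ hsupp
  have hdiv_int : Integrable (fun x => fderiv ℝ F x x) μ := by
    refine ((hF.continuous_fderiv one_ne_zero).clm_apply continuous_id)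
      |>.integrable_of_hasCompactSupport ((hFs.fderiv ℝ).mono fun x hx => ?_)
    exact Function.mem_support.2 fun h => Function.mem_support.1 hx (by simp [h])
  have hgrad_int : Integrable (fun x => ‖fderiv ℝ f x‖ * Real.exp (-β * ‖x‖ ^ q)) μ :=
    ContDiff.integrable_mul_comp_norm_of_eqOn_ball_zero
      (contDiff_zero.2 (hf.continuous_fderiv one_ne_zero).norm) one_pos hDf_ball hexp
      (hsupp.fderiv ℝ).norm
  have hw_int : Integrable (fun x => f x * Real.exp (-β * ‖x‖ ^ q)) μ :=
    hf.integrable_mul_comp_norm_of_eqOn_ball_zero one_pos hf_ball hexp hsupp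
  have hpow_int : Integrable (fun x => f x * ‖x‖ ^ (q - 1) * Real.exp (-β * ‖x‖ ^ q)) μ := by
    simpa only [mul_assoc] using hf.integrable_mul_comp_norm_of_eqOn_ball_zero one_pos hf_ball
      (fun t ht => (Real.contDiffAt_rpow_const_of_ne ht).mul (hexp t ht)) hsupp
  have hmono : ∫ x, (fderiv ℝ F x x + finrank ℝ V * F x) ∂μ ≤
      ∫ x, (‖fderiv ℝ f x‖ * Real.exp (-β * ‖x‖ ^ q)
        + (finrank ℝ V - 1) * (f x * Real.exp (-β * ‖x‖ ^ q))
        - β * q * (f x * ‖x‖ ^ (q - 1) * Real.exp (-β * ‖x‖ ^ q))) ∂μ :=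
    integral_mono (hdiv_int.add (hF_int.const_mul _))
      ((hgrad_int.add (hw_int.const_mul _)).sub (hpow_int.const_mul _))
      fun x => fderiv_apply_self_add_finrank_mul_le (hf.differentiable one_ne_zero x) (hf0 x)
        hvan q β
  rw [integral_add hdiv_int (hF_int.const_mul _),
    integral_sub (by exact hgrad_int.add (hw_int.const_mul _)) (hpow_int.const_mul _),
    integral_add hgrad_int (hw_int.const_mul _), integral_const_mul, integral_const_mul,
    integral_const_mul, integral_fderiv_apply_self hF hFs] at hmono
  linarith

end Weighted

theorem stmt9_general (d : ℕ) (q β : ℝ)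
    (f : E d → ℝ) (hf : ContDiff ℝ 1 f) (hsupp : HasCompactSupport f)
    (hf0 : ∀ x, 0 ≤ f x) (hvan : ∀ x ∈ ball (0 : E d) 1, f x = 0) :
    β * q * ∫ x, f x * ‖x‖ ^ (q - 1) * Real.exp (-β * ‖x‖ ^ q) ≤
      (∫ x, ‖gradient f x‖ * Real.exp (-β * ‖x‖ ^ q)) +
        ((d : ℝ) - 1) * ∫ x, f x * Real.exp (-β * ‖x‖ ^ q) := by
  have hgrad : ∀ x, ‖gradient f x‖ = ‖fderiv ℝ f x‖ := fun x =>
    (InnerProductSpace.toDual ℝ (E d)).symm.norm_map _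
  simpa only [hgrad, finrank_euclideanSpace_fin] using
    mul_integral_mul_rpow_mul_exp_le (μ := volume) hf hsupp hf0 hvan q β

/-- For `μ(dx) = exp(-β|x|^q) dx`, `d ≥ 2`, `1 < q < ∞`,
`β > 0`, and every nonnegative `f ∈ C_0^1(ℝ^d)` vanishing on the unit ball:
`βq ∫ f |x|^{q-1} dμ ≤ ∫ |∇f| dμ + (d-1) ∫ f dμ`. -/
theorem stmt9 (d : ℕ) (hd : 2 ≤ d) (q β : ℝ) (hq : 1 < q) (hβ : 0 < β)
    (f : E d → ℝ) (hf : ContDiff ℝ 1 f) (hsupp : HasCompactSupport f)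
    (hf0 : ∀ x, 0 ≤ f x) (hvan : ∀ x ∈ ball (0 : E d) 1, f x = 0) :
    β * q * ∫ x, f x * ‖x‖ ^ (q - 1) * Real.exp (-β * ‖x‖ ^ q) ≤
      (∫ x, ‖gradient f x‖ * Real.exp (-β * ‖x‖ ^ q)) +
        ((d : ℝ) - 1) * ∫ x, f x * Real.exp (-β * ‖x‖ ^ q) :=
  stmt9_general d q β f hf hsupp hf0 hvan
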